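/- Let (E, L, B) be a weakly left-resolving labeled space and let A ∈ B be nonempty. Then the set H(A) := {B ∈ B : B ⊆ r(A, α₁) ∪ ... ∪ r(A, αₙ) for some finite collection of labeled paths α₁, ..., αₙ ∈ L^#(E)} is the smallest hereditary subset of B containing A. -/

import Mathlib

universe u v

variable {V : Type u} {Λ : Type v}

/-- The relative range `r(S, α)` of a set of vertices along a labeled path. -/
def relRange (Edge : V → Λ → V → Prop) : Set V → List Λ → Set V
  | S, [] => S
  | S, a :: α => relRange Edge {w | ∃ u ∈ S, Edge u a w} α

/-- The range `r(α)` of a labeled path. -/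
def lrange (Edge : V → Λ → V → Prop) (α : List Λ) : Set V :=
  relRange Edge Set.univ α

/-- `α` is a (nonempty) labeled path of the labeled graph. -/
def IsLP (Edge : V → Λ → V → Prop) (α : List Λ) : Prop :=
  α ≠ [] ∧ (lrange Edge α).Nonempty

/-- `L(SE¹)`: labels of edges emitted from `S`. -/
def edgeLabels (Edge : V → Λ → V → Prop) (S : Set V) : Set Λ :=
  {a | ∃ u ∈ S, ∃ w, Edge u a w}

/-- `S` is regular: every nonempty `B ∈ ℬ` with `B ⊆ S` emits a finite nonzero set of labels. -/
def RegularSet (Edge : V → Λ → V → Prop) (ℬ : Set (Set V)) (S : Set V) : Prop :=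
  ∀ B ∈ ℬ, B ⊆ S → B.Nonempty →
    (edgeLabels Edge B).Finite ∧ (edgeLabels Edge B).Nonempty

/-- `H ⊆ ℬ` is hereditary. -/
def Hered (Edge : V → Λ → V → Prop) (ℬ H : Set (Set V)) : Prop :=
  H ⊆ ℬ ∧ (∀ A ∈ H, ∀ α : List Λ, IsLP Edge α → relRange Edge A α ∈ H) ∧
    (∀ A ∈ H, ∀ B ∈ H, A ∪ B ∈ H) ∧ (∀ A ∈ H, ∀ B ∈ ℬ, B ⊆ A → B ∈ H)

/-- `H` is saturated. -/
def Satur (Edge : V → Λ → V → Prop) (ℬ H : Set (Set V)) : Prop :=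
  ∀ A ∈ ℬ, RegularSet Edge ℬ A →
    (∀ α : List Λ, IsLP Edge α → relRange Edge A α ∈ H) → A ∈ H

/-- `H(A)`: sets covered by finitely many relative ranges `r(A, αᵢ)`, `αᵢ ∈ L^#(E)`. -/
def HSet (Edge : V → Λ → V → Prop) (ℬ : Set (Set V)) (A : Set V) : Set (Set V) :=
  {B ∈ ℬ | ∃ l : List (List Λ), (∀ α ∈ l, α = [] ∨ IsLP Edge α) ∧
    B ⊆ ⋃ α ∈ l, relRange Edge A α}

/-- `S(H(A))`: the saturation of `H(A)`. -/
def SHSet (Edge : V → Λ → V → Prop) (ℬ : Set (Set V)) (A : Set V) : Set (Set V) :=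
  {B ∈ ℬ | ∃ n : ℕ,
    (∀ β : List Λ, (β = [] ∨ IsLP Edge β) → β.length = n →
      relRange Edge B β ∈ HSet Edge ℬ A) ∧
    (∀ γ : List Λ, (γ = [] ∨ IsLP Edge γ) → γ.length < n →
      ∃ C ∈ HSet Edge ℬ A, ∃ D ∈ ℬ, RegularSet Edge ℬ D ∧ relRange Edge B γ = C ∪ D)}

/-- `ℬ` is an accommodating set for the labeled graph. -/
def Accommodating (Edge : V → Λ → V → Prop) (ℬ : Set (Set V)) : Prop :=
  (∀ α : List Λ, IsLP Edge α → lrange Edge α ∈ ℬ) ∧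
    (∀ A ∈ ℬ, ∀ α : List Λ, IsLP Edge α → relRange Edge A α ∈ ℬ) ∧
    (∀ A ∈ ℬ, ∀ B ∈ ℬ, A ∪ B ∈ ℬ) ∧ (∀ A ∈ ℬ, ∀ B ∈ ℬ, A ∩ B ∈ ℬ)

/-- `ℬ` is non-degenerate: closed under relative complements (and contains `∅`). -/
def NonDegenerate (ℬ : Set (Set V)) : Prop :=
  (∅ : Set V) ∈ ℬ ∧ ∀ A ∈ ℬ, ∀ B ∈ ℬ, A \ B ∈ ℬ

/-- The labeled space is weakly left-resolving. -/
def WLR (Edge : V → Λ → V → Prop) (ℬ : Set (Set V)) : Prop :=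
  ∀ A ∈ ℬ, ∀ B ∈ ℬ, ∀ α : List Λ, IsLP Edge α →
    relRange Edge (A ∩ B) α = relRange Edge A α ∩ relRange Edge B α

/-- `ℬ` is the smallest non-degenerate accommodating set. -/
def SmallestAccom (Edge : V → Λ → V → Prop) (ℬ : Set (Set V)) : Prop :=
  Accommodating Edge ℬ ∧ NonDegenerate ℬ ∧
    ∀ ℬ' : Set (Set V), Accommodating Edge ℬ' → NonDegenerate ℬ' → ℬ ⊆ ℬ'

/-- `x_{[1,n]}`: the length-`n` prefix of an infinite word. -/
def wordPrefix (x : ℕ → Λ) (n : ℕ) : List Λ := List.ofFn fun i : Fin n => x i.val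

/-- `x` lies in the closure of `L(E^∞)`: all finite prefixes are labeled paths. -/
def InfWord (Edge : V → Λ → V → Prop) (x : ℕ → Λ) : Prop :=
  ∀ n : ℕ, 1 ≤ n → IsLP Edge (wordPrefix x n)

/-- Strong cofinality of a labeled space. -/
def StrCofinal (Edge : V → Λ → V → Prop) (ℬ : Set (Set V)) : Prop :=
  ∀ A ∈ ℬ, A.Nonempty → ∀ x : ℕ → Λ, InfWord Edge x →
    ∃ N : ℕ, 1 ≤ N ∧ ∃ l : List (List Λ), (∀ α ∈ l, IsLP Edge α) ∧
      lrange Edge (wordPrefix x N) ⊆ ⋃ α ∈ l, relRange Edge A α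

/-- Minimality: the only hereditary saturated subsets of `ℬ` are `{∅}` and `ℬ`. -/
def MinimalLS (Edge : V → Λ → V → Prop) (ℬ : Set (Set V)) : Prop :=
  ∀ H : Set (Set V), Hered Edge ℬ H → Satur Edge ℬ H → H ⊆ {∅} ∨ H = ℬ

/-- `L(SEⁿ)`: labels of paths of length `n` with source in `S`. -/
def labelsOfLen (Edge : V → Λ → V → Prop) (S : Set V) (n : ℕ) : Set (List Λ) :=
  {β | β.length = n ∧ (relRange Edge S β).Nonempty}

/-- The labeled space is disagreeable. -/
def Disagreeable (Edge : V → Λ → V → Prop) (ℬ : Set (Set V)) : Prop :=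
  ∀ A ∈ ℬ, A.Nonempty → ∀ β : List Λ, IsLP Edge β →
    ∃ n : ℕ, 1 ≤ n ∧ labelsOfLen Edge A (β.length * n) ≠ {(List.replicate n β).flatten}

/-- `(α, A)` is a cycle. -/
def IsCycle (Edge : V → Λ → V → Prop) (ℬ : Set (Set V)) (α : List Λ) (A : Set V) : Prop :=
  IsLP Edge α ∧ A ∈ ℬ ∧ A.Nonempty ∧ ∀ B ∈ ℬ, B ⊆ A → relRange Edge B α = B

/-- The cycle `(α, A)` has an exit. -/
def CycleHasExit (Edge : V → Λ → V → Prop) (ℬ : Set (Set V)) (α : List Λ) (A : Set V) : Prop :=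
  ∃ t : ℕ, 1 ≤ t ∧ t ≤ α.length ∧ ∃ B ∈ ℬ, B.Nonempty ∧
    B ⊆ relRange Edge A (α.take t) ∧
    edgeLabels Edge B ≠ {a : Λ | α[t % α.length]? = some a}

/-- The cycle `(α, A)` has no exits. -/
def CycleNoExit (Edge : V → Λ → V → Prop) (ℬ : Set (Set V)) (α : List Λ) (A : Set V) : Prop :=
  ∀ t : ℕ, 1 ≤ t → t ≤ α.length → ∀ B ∈ ℬ, B.Nonempty →
    B ⊆ relRange Edge A (α.take t) →
    RegularSet Edge ℬ B ∧ edgeLabels Edge B = {a : Λ | α[t % α.length]? = some a}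

/-- Condition (L): every cycle has an exit. -/
def CondL (Edge : V → Λ → V → Prop) (ℬ : Set (Set V)) : Prop :=
  ∀ (α : List Λ) (A : Set V), IsCycle Edge ℬ α A → CycleHasExit Edge ℬ α A

/-- `α` is a loop at `A`. -/
def IsLoop (Edge : V → Λ → V → Prop) (α : List Λ) (A : Set V) : Prop :=
  IsLP Edge α ∧ A ⊆ relRange Edge A α

/-- The loop `(α, A)` has an exit. -/
def LoopHasExit (Edge : V → Λ → V → Prop) (α : List Λ) (A : Set V) : Prop :=
  {β : List Λ | ∃ k : ℕ, 1 ≤ k ∧ k ≤ α.length ∧ β = α.take k} ⊂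
      {β : List Λ | 1 ≤ β.length ∧ β.length ≤ α.length ∧ (relRange Edge A β).Nonempty} ∨
    A ⊂ relRange Edge A α

/-- `β` is an irreducible path: not a repetition of a proper initial path. -/
def IrreduciblePath (β : List Λ) : Prop :=
  ∀ k : ℕ, 1 ≤ k → k < β.length → ∀ m : ℕ, β ≠ (List.replicate m (β.take k)).flatten

/-- The generalized vertex `[v]_l`. -/
def gvClass (Edge : V → Λ → V → Prop) (l : ℕ) (v : V) : Set V :=
  {w | ∀ β : List Λ, 1 ≤ β.length → β.length ≤ l → (v ∈ lrange Edge β ↔ w ∈ lrange Edge β)}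

/-- `s(x)`: sources of infinite paths labeled by `x`. -/
def srcInf (Edge : V → Λ → V → Prop) (x : ℕ → Λ) : Set V :=
  {w | ∃ p : ℕ → V, p 0 = w ∧ ∀ n : ℕ, Edge (p n) (x n) (p (n + 1))}

/-! Membership in `H(A)` only needs a finite cover by relative ranges `r(A, α)` along arbitrary
words `α`: a nonempty word with `r(A, α) ≠ ∅` is a labeled path, and the others contribute nothing
to the cover. With the side condition gone, `H(A)` is visibly closed under unions (concatenate the
covers), subsets, and relative ranges (`r(r(A, α), β) = r(A, α β)`), while every hereditary `H ∋ A`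
contains each `A ∪ r(A, α₁) ∪ ⋯ ∪ r(A, αₙ)` (the `A ∪` covers the empty cover, as `∅ ∈ H` is
not given), hence all of `H(A)`. -/

section

variable {Edge : V → Λ → V → Prop}

theorem relRange_append (S : Set V) (α β : List Λ) :
    relRange Edge S (α ++ β) = relRange Edge (relRange Edge S α) β := by
  induction α generalizing S with
  | nil => rfl
  | cons a α ih => exact ih _

theorem relRange_mono {S T : Set V} (h : S ⊆ T) (α : List Λ) :
    relRange Edge S α ⊆ relRange Edge T α := by
  induction α generalizing S T with
  | nil => exact h
  | cons a α ih => exact ih fun w ⟨u, hu, he⟩ => ⟨u, h hu, he⟩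

theorem relRange_iUnion {ι : Sort*} (f : ι → Set V) (α : List Λ) :
    relRange Edge (⋃ i, f i) α = ⋃ i, relRange Edge (f i) α := by
  induction α generalizing f with
  | nil => rfl
  | cons a α ih =>
    have hstep :
        {w | ∃ u ∈ ⋃ i, f i, Edge u a w} = ⋃ i, {w | ∃ u ∈ f i, Edge u a w} := by
      ext w
      simp only [Set.mem_ofPred_eq, Set.mem_iUnion]
      grind
    exact (congrArg (relRange Edge · α) hstep).trans (ih _)

theorem isLP_of_relRange_nonempty {S : Set V} {α : List Λ} (hα : α ≠ [])
    (h : (relRange Edge S α).Nonempty) : IsLP Edge α :=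
  ⟨hα, h.mono (relRange_mono (Set.subset_univ S) α)⟩

variable {ℬ : Set (Set V)} {A : Set V}

theorem mem_HSet_iff_exists_cover {B : Set V} :
    B ∈ HSet Edge ℬ A ↔
      B ∈ ℬ ∧ ∃ l : List (List Λ), B ⊆ ⋃ α ∈ l, relRange Edge A α := by
  classical
  refine ⟨fun ⟨hB, l, _, hcov⟩ => ⟨hB, l, hcov⟩, fun ⟨hB, l, hcov⟩ => ⟨hB, ?_⟩⟩
  refine ⟨l.filter fun α => (relRange Edge A α).Nonempty, fun α hα => ?_, fun x hx => ?_⟩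
  · have hne := of_decide_eq_true (List.mem_filter.1 hα).2
    by_cases hnil : α = []
    · exact Or.inl hnil
    · exact Or.inr (isLP_of_relRange_nonempty hnil hne)
  · obtain ⟨α, hα, hxα⟩ := Set.mem_iUnion₂.1 (hcov hx)
    have hkept : α ∈ l.filter fun α => (relRange Edge A α).Nonempty :=
      List.mem_filter.2 ⟨hα, decide_eq_true ⟨x, hxα⟩⟩
    exact Set.mem_iUnion₂.2 ⟨α, hkept, hxα⟩

theorem self_mem_HSet (hA : A ∈ ℬ) : A ∈ HSet Edge ℬ A :=
  mem_HSet_iff_exists_cover.2 ⟨hA, [[]], by simp [relRange]⟩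

theorem relRange_mem_HSet (hacc : Accommodating Edge ℬ) {B : Set V} (hB : B ∈ HSet Edge ℬ A)
    {β : List Λ} (hβ : IsLP Edge β) : relRange Edge B β ∈ HSet Edge ℬ A := by
  obtain ⟨hBℬ, l, hcov⟩ := mem_HSet_iff_exists_cover.1 hB
  refine mem_HSet_iff_exists_cover.2 ⟨hacc.2.1 B hBℬ β hβ, l.map (· ++ β), ?_⟩
  calc relRange Edge B β
      ⊆ relRange Edge (⋃ α ∈ l, relRange Edge A α) β := relRange_mono hcov β
    _ = ⋃ α ∈ l, relRange Edge A (α ++ β) := by simp only [relRange_iUnion, relRange_append]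
    _ = ⋃ γ ∈ l.map (· ++ β), relRange Edge A γ := by simp

theorem union_mem_HSet (hacc : Accommodating Edge ℬ) {B C : Set V} (hB : B ∈ HSet Edge ℬ A)
    (hC : C ∈ HSet Edge ℬ A) : B ∪ C ∈ HSet Edge ℬ A := by
  obtain ⟨hBℬ, l₁, hcov₁⟩ := mem_HSet_iff_exists_cover.1 hB
  obtain ⟨hCℬ, l₂, hcov₂⟩ := mem_HSet_iff_exists_cover.1 hC
  refine mem_HSet_iff_exists_cover.2 ⟨hacc.2.2.1 B hBℬ C hCℬ, l₁ ++ l₂, ?_⟩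
  simp only [List.mem_append, Set.iUnion_or, Set.iUnion_union_distrib]
  exact Set.union_subset_union hcov₁ hcov₂

theorem mem_HSet_of_subset {B C : Set V} (hB : B ∈ HSet Edge ℬ A) (hC : C ∈ ℬ)
    (hCB : C ⊆ B) : C ∈ HSet Edge ℬ A :=
  let ⟨_, l, hl, hcov⟩ := hB
  ⟨hC, l, hl, hCB.trans hcov⟩

theorem hered_HSet (hacc : Accommodating Edge ℬ) : Hered Edge ℬ (HSet Edge ℬ A) :=
  ⟨fun _ hB => hB.1, fun _ hB _ hβ => relRange_mem_HSet hacc hB hβ,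
    fun _ hB _ hC => union_mem_HSet hacc hB hC, fun _ hB _ hC hCB => mem_HSet_of_subset hB hC hCB⟩

variable {H : Set (Set V)}

theorem Hered.union_biUnion_mem {ι : Type*} (hH : Hered Edge ℬ H) {S : Set V} (hS : S ∈ H)
    (f : ι → Set V) (l : List ι) (hf : ∀ i ∈ l, f i ∈ H) :
    S ∪ ⋃ i ∈ l, f i ∈ H := by
  induction l with
  | nil => simpa using hS
  | cons j l ih =>
    have htail : S ∪ ⋃ i ∈ l, f i ∈ H := ih fun i hi => hf i (List.mem_cons_of_mem j hi)
    have hmem := hH.2.2.1 _ (hf j List.mem_cons_self) _ htail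
    simp only [List.mem_cons, Set.iUnion_iUnion_eq_or_left]
    rwa [Set.union_left_comm]

theorem HSet_subset_of_hered (hH : Hered Edge ℬ H) (hAH : A ∈ H) : HSet Edge ℬ A ⊆ H := by
  rintro B ⟨hBℬ, l, hl, hcov⟩
  have hrange : ∀ α ∈ l, relRange Edge A α ∈ H := fun α hα => by
    rcases hl α hα with rfl | hα
    · exact hAH
    · exact hH.2.1 A hAH α hα
  exact hH.2.2.2 _ (hH.union_biUnion_mem hAH _ l hrange) B hBℬ (hcov.trans Set.subset_union_right)

end

theorem HSet_smallest_hereditary_general (Edge : V → Λ → V → Prop) (ℬ : Set (Set V))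
    (hacc : Accommodating Edge ℬ)
    (A : Set V) (hA : A ∈ ℬ) :
    Hered Edge ℬ (HSet Edge ℬ A) ∧ A ∈ HSet Edge ℬ A ∧
      ∀ H : Set (Set V), Hered Edge ℬ H → A ∈ H → HSet Edge ℬ A ⊆ H :=
  ⟨hered_HSet hacc, self_mem_HSet hA, fun _ hH hAH => HSet_subset_of_hered hH hAH⟩

/-- `H(A)` is the smallest hereditary subset of `ℬ` containing `A`. -/
theorem HSet_smallest_hereditary (Edge : V → Λ → V → Prop) (ℬ : Set (Set V))
    (hacc : Accommodating Edge ℬ) (hnd : NonDegenerate ℬ) (hwlr : WLR Edge ℬ)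
    (A : Set V) (hA : A ∈ ℬ) (hAne : A.Nonempty) :
    Hered Edge ℬ (HSet Edge ℬ A) ∧ A ∈ HSet Edge ℬ A ∧
      ∀ H : Set (Set V), Hered Edge ℬ H → A ∈ H → HSet Edge ℬ A ⊆ H :=
  HSet_smallest_hereditary_general Edge ℬ hacc A hA
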